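/- Let φ be a satisfiable logically separable epistemic term in K_n. If α₁, α₂ ∈ Prop(φ) with α₁ ⊭ α₂ and α₂ ⊭ α₁, then neither α₁ nor α₂ entails α₁ ∧ α₂, contradicting separability; hence in a smallest logically separable epistemic term representation, |Prop(φ)| ≤ 1. -/
import Mathlib


universe u v

inductive Fm (A P : Type) : Type
  | tru : Fm A P
  | var : P → Fm A P
  | neg : Fm A P → Fm A P
  | and : Fm A P → Fm A P → Fm A P
  | box : A → Fm A P → Fm A P

namespace Fm
variable {A P : Type}
def or (φ ψ : Fm A P) : Fm A P := neg ((neg φ).and (neg ψ))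
def bot : Fm A P := neg tru
def dia (i : A) (φ : Fm A P) : Fm A P := neg (box i (neg φ))
end Fm

structure KM (A P : Type) where
  S : Type
  R : A → S → S → Prop
  V : S → P → Prop

variable {A P : Type}

def Sat (M : KM A P) : M.S → Fm A P → Prop
  | _, .tru => True
  | s, .var p => M.V s p
  | s, .neg φ => ¬ Sat M s φ
  | s, .and φ ψ => Sat M s φ ∧ Sat M s ψ
  | s, .box i φ => ∀ t, M.R i s t → Sat M t φ

def Satisfiable (φ : Fm A P) : Prop := ∃ (M : KM A P) (s : M.S), Sat M s φ

def Entails (φ ψ : Fm A P) : Prop := ∀ (M : KM A P) (s : M.S), Sat M s φ → Sat M s ψ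

def FEquiv (φ ψ : Fm A P) : Prop := Entails φ ψ ∧ Entails ψ φ

def IsProp : Fm A P → Prop
  | .tru => True
  | .var _ => True
  | .neg φ => IsProp φ
  | .and φ ψ => IsProp φ ∧ IsProp ψ
  | .box _ _ => False

def Basic (φ : Fm A P) : Prop :=
  IsProp φ ∨ (∃ i ψ, φ = Fm.box i ψ) ∨ (∃ i ψ, φ = Fm.dia i ψ)

def conj : List (Fm A P) → Fm A P
  | [] => Fm.tru
  | φ :: L => φ.and (conj L)

def disj : List (Fm A P) → Fm A P
  | [] => Fm.bot
  | φ :: L => φ.or (disj L)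

def EpTerm (L : List (Fm A P)) : Prop := ∀ c ∈ L, Basic c

def LogSep (L : List (Fm A P)) : Prop :=
  ∀ η : Fm A P, Basic η → Entails (conj L) η → ∃ α ∈ L, Entails α η

def fvars : Fm A P → Set P
  | .tru => ∅
  | .var p => {p}
  | .neg φ => fvars φ
  | .and φ ψ => fvars φ ∪ fvars ψ
  | .box _ φ => fvars φ

def fsize : Fm A P → ℕ
  | .tru => 1
  | .var _ => 1
  | .neg φ => fsize φ + 1
  | .and φ ψ => fsize φ + fsize ψ + 1
  | .box _ φ => fsize φ + 1

lemma sat_conj (M : KM A P) (s : M.S) (L : List (Fm A P)) :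
    Sat M s (conj L) ↔ ∀ c ∈ L, Sat M s c := by
  induction L with
  | nil => simp [conj, Sat]
  | cons a L ih => simp [conj, Sat, ih]

lemma entails_conj_of_subset {L M : List (Fm A P)} (h : ∀ c ∈ M, c ∈ L) :
    Entails (conj L) (conj M) := by
  intro W s hs
  rw [sat_conj] at hs ⊢
  exact fun c hc => hs c (h c hc)

lemma conj_entails_mem {L : List (Fm A P)} {c : Fm A P} (hc : c ∈ L) :
    Entails (conj L) c := by
  intro M s hs
  exact (sat_conj M s L).1 hs c hc

lemma one_le_fsize (φ : Fm A P) : 1 ≤ fsize φ := by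
  induction φ <;> simp [fsize] <;> omega

lemma fsize_conj_remove (L₁ L₂ : List (Fm A P)) (α : Fm A P) :
    fsize (conj (L₁ ++ L₂)) < fsize (conj (L₁ ++ α :: L₂)) := by
  induction L₁ with
  | nil =>
    simp only [List.nil_append, conj, fsize]
    have := one_le_fsize α; omega
  | cons a L₁ ih =>
    simp only [List.cons_append, conj, fsize, List.append_eq] at ih ⊢
    omega

lemma entails_trans {a b c : Fm A P} (h1 : Entails a b) (h2 : Entails b c) :
    Entails a c := fun M s hs => h2 M s (h1 M s hs)

/-- If some other conjunct entails α, deleting α contradicts minimality. -/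
lemma remove_redundant (L L₁ L₂ : List (Fm A P)) (α : Fm A P)
    (hL : L = L₁ ++ α :: L₂)
    (hterm : EpTerm L) (hsep : LogSep L)
    (hmin : ∀ L' : List (Fm A P), EpTerm L' → LogSep L' →
      FEquiv (conj L') (conj L) → fsize (conj L) ≤ fsize (conj L'))
    (β : Fm A P) (hβL : β ∈ L) (hβne : β ≠ α) (hβα : Entails β α) : False := by
  have hsub : ∀ c ∈ L₁ ++ L₂, c ∈ L := by
    intro c hc; rw [hL]
    rcases List.mem_append.1 hc with h | h
    · exact List.mem_append.2 (Or.inl h)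
    · exact List.mem_append.2 (Or.inr (List.mem_cons_of_mem _ h))
  have hmem : ∀ c ∈ L, c = α ∨ c ∈ L₁ ++ L₂ := by
    intro c hc; rw [hL] at hc
    rcases List.mem_append.1 hc with h | h
    · exact Or.inr (List.mem_append.2 (Or.inl h))
    · rcases List.mem_cons.1 h with h | h
      · exact Or.inl h
      · exact Or.inr (List.mem_append.2 (Or.inr h))
  have hβL' : β ∈ L₁ ++ L₂ := by
    rcases hmem β hβL with h | h; exact absurd h hβne; exact h
  have hLL' : Entails (conj L) (conj (L₁ ++ L₂)) := entails_conj_of_subset hsub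
  have hL'L : Entails (conj (L₁ ++ L₂)) (conj L) := by
    intro M s hs
    rw [sat_conj] at hs ⊢
    intro c hc
    rcases hmem c hc with rfl | h
    · exact hβα M s (hs β hβL')
    · exact hs c h
  have hterm' : EpTerm (L₁ ++ L₂) := fun c hc => hterm c (hsub c hc)
  have hsep' : LogSep (L₁ ++ L₂) := by
    intro η hη hent
    obtain ⟨γ, hγL, hγη⟩ := hsep η hη (entails_trans hLL' hent)
    rcases hmem γ hγL with rfl | h
    · exact ⟨β, hβL', entails_trans hβα hγη⟩
    · exact ⟨γ, h, hγη⟩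
  have := hmin (L₁ ++ L₂) hterm' hsep' ⟨hL'L, hLL'⟩
  have hlt : fsize (conj (L₁ ++ L₂)) < fsize (conj L) := by
    rw [hL]; exact fsize_conj_remove L₁ L₂ α
  omega

theorem smallest_separable_term_at_most_one_prop_conjunct
    (L : List (Fm A P)) (hterm : EpTerm L) (hsep : LogSep L)
    (hsat : Satisfiable (conj L))
    (hmin : ∀ L' : List (Fm A P), EpTerm L' → LogSep L' →
      FEquiv (conj L') (conj L) → fsize (conj L) ≤ fsize (conj L')) :
    (∀ α₁ ∈ L, ∀ α₂ ∈ L, IsProp α₁ → IsProp α₂ →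
       ¬ Entails α₁ α₂ → ¬ Entails α₂ α₁ →
       ¬ Entails α₁ (α₁.and α₂) ∧ ¬ Entails α₂ (α₁.and α₂)) ∧
    (∀ α₁ ∈ L, ∀ α₂ ∈ L, IsProp α₁ → IsProp α₂ → α₁ = α₂) := by
  constructor
  · intro α₁ h₁ α₂ h₂ hp₁ hp₂ hn₁₂ hn₂₁
    constructor
    · intro h
      exact hn₁₂ (fun M s hs => (h M s hs).2)
    · intro h
      exact hn₂₁ (fun M s hs => (h M s hs).1)
  · intro α₁ h₁ α₂ h₂ hp₁ hp₂
    by_contra hne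
    -- find β ≠ α with β ∈ L and Entails β α, for α ∈ {α₁, α₂}
    have key : ∃ α β : Fm A P, α ∈ L ∧ β ∈ L ∧ β ≠ α ∧ Entails β α := by
      by_cases h21 : Entails α₂ α₁
      · exact ⟨α₁, α₂, h₁, h₂, hne ∘ Eq.symm ∘ (· ), fun M s => h21 M s⟩
      by_cases h12 : Entails α₁ α₂
      · exact ⟨α₂, α₁, h₂, h₁, hne, h12⟩
      -- neither entails the other: use separability on α₁ ∧ α₂
      have hbasic : Basic (α₁.and α₂) := Or.inl ⟨hp₁, hp₂⟩
      have hent : Entails (conj L) (α₁.and α₂) := by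
        intro M s hs
        exact ⟨conj_entails_mem h₁ M s hs, conj_entails_mem h₂ M s hs⟩
      obtain ⟨γ, hγL, hγ⟩ := hsep _ hbasic hent
      refine ⟨α₁, γ, h₁, hγL, ?_, fun M s hs => (hγ M s hs).1⟩
      rintro rfl
      exact h12 (fun M s hs => (hγ M s hs).2)
    obtain ⟨α, β, hαL, hβL, hβne, hβα⟩ := key
    obtain ⟨L₁, L₂, hL⟩ := List.append_of_mem hαL
    exact remove_redundant L L₁ L₂ α hL hterm hsep hmin β hβL hβne hβα
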